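/- In the equal-sharing cost game with one player and two contests, where contest 1 has prize ε and is won by producing output 1 along activity 1 at cost ε/2, while contest 2 has prize 1 and is won by producing output 1 along activity 2 at cost 1, the player's optimal strategy wins only contest 1, achieving total prize ε; hence the ratio of the maximum total prize (1 + ε) to the prize allocated at the optimum of the player's utility can be made arbitrarily large as ε → 0. -/
import Mathlib


open Finset

noncomputable section OnePlayer

/-- utility of the single player: prizes won minus linear cost -/
def util1 (ε : ℝ) (b : Fin 2 → ℝ) : ℝ :=
  (if 1 ≤ b 0 then ε else 0) + (if 1 ≤ b 1 then (1 : ℝ) else 0)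
    - (ε / 2 * b 0 + 1 * b 1)

/-- total prize allocated at profile `b` -/
def prize1 (ε : ℝ) (b : Fin 2 → ℝ) : ℝ :=
  (if 1 ≤ b 0 then ε else 0) + (if 1 ≤ b 1 then (1 : ℝ) else 0)

/-- In the one-player game, producing `(1,0)` is utility-maximizing, wins only contest 1
(allocating prize `ε`), while the maximum allocatable prize is `1 + ε`; hence the ratio
`(1+ε)/ε` blows up as `ε → 0`. -/
theorem one_player_allocation_gap (ε : ℝ) (hε0 : 0 < ε) (hε1 : ε < 1) :
    (∀ b : Fin 2 → ℝ, (∀ j, 0 ≤ b j) → util1 ε b ≤ util1 ε ![1, 0]) ∧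
    (1 ≤ (![1, 0] : Fin 2 → ℝ) 0) ∧ ¬ (1 ≤ (![1, 0] : Fin 2 → ℝ) 1) ∧
    prize1 ε ![1, 0] = ε ∧
    (∀ b : Fin 2 → ℝ, prize1 ε b ≤ 1 + ε) := by
  refine ⟨?_, by norm_num, by norm_num, by simp [prize1], ?_⟩
  · intro b hb
    have h0 := hb 0
    have h1 := hb 1
    simp only [util1, Matrix.cons_val_zero, Matrix.cons_val_one, Matrix.head_cons]
    split_ifs with ha hc hc <;> norm_num <;> nlinarith
  · intro b
    simp only [prize1]
    split_ifs <;> nlinarith
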